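/- arXiv:1504.04244 — 2 statements merged into one kernel-verified Lean document; each statement's English description precedes it below -/
import Mathlib

section
/- Let α > 2 and define f(β) = log(1+β)/β^{2/α} for β > 0. Then f has a unique global maximum on (0,∞), attained at β* = -1 + exp(W₀(-(α/2)e^{-α/2}) + α/2), where W₀ is the principal branch of the Lambert W function. -/
/-!
With `p = 2/α`, the derivative of `β ↦ log(1+β)/β^p` is `h(log(1+β)) / β^(1+p)` where
`h(u) = 1 - e^(-u) - p u`. Since `h` is strictly concave with `h 0 = 0`, it is positive before its
positive root `u*` and negative after it, so the function increases up to `β* = e^(u*) - 1` and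
decreases afterwards. Putting `u* = w + α/2`, the equation `h(u*) = 0` reads
`w e^w = -(α/2) e^(-α/2)`, and the branch `w = W₀(…) ≥ -1` is the one giving `u* > 0`.
-/

open Real Set

section ConcaveRoots

variable {𝕜 : Type*} [Field 𝕜] [LinearOrder 𝕜] [IsStrictOrderedRing 𝕜] {s : Set 𝕜} {f : 𝕜 → 𝕜}
  {c u : 𝕜}

theorem StrictConcaveOn.pos_of_lt_root (hf : StrictConcaveOn 𝕜 s f) (h0 : (0 : 𝕜) ∈ s)
    (hc : c ∈ s) (hu : u ∈ s) (hf0 : f 0 = 0) (hfc : f c = 0) (hu0 : 0 < u) (huc : u < c) :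
    0 < f u := by
  have := hf.secant_strict_mono h0 hu hc hu0.ne' (hu0.trans huc).ne' huc
  simpa [hf0, hfc, div_pos_iff_of_pos_right hu0] using this

theorem StrictConcaveOn.neg_of_root_lt (hf : StrictConcaveOn 𝕜 s f) (h0 : (0 : 𝕜) ∈ s)
    (hc : c ∈ s) (hu : u ∈ s) (hf0 : f 0 = 0) (hfc : f c = 0) (hc0 : 0 < c) (hcu : c < u) :
    f u < 0 := by
  have := hf.secant_strict_mono h0 hc hu hc0.ne' (hc0.trans hcu).ne' hcu
  simpa [hf0, hfc, div_neg_iff, hc0.trans hcu, (hc0.trans hcu).not_gt] using this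

end ConcaveRoots

theorem strictConcaveOn_one_sub_exp_neg_sub_mul (p : ℝ) :
    StrictConcaveOn ℝ univ fun u => 1 - exp (-u) - p * u := by
  have hderiv : deriv (fun u => 1 - exp (-u) - p * u) = fun u => exp (-u) - p := by
    funext u
    have h : HasDerivAt (fun u => 1 - exp (-u) - p * u) (-(exp (-u) * -1) - p * 1) u :=
      ((hasDerivAt_neg u).exp.const_sub 1).sub ((hasDerivAt_id u).const_mul p)
    rw [h.deriv]
    ring
  refine StrictAnti.strictConcaveOn_univ_of_deriv (by fun_prop) ?_
  rw [hderiv]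
  exact fun x y hxy => by simpa using exp_lt_exp.2 (neg_lt_neg hxy)

theorem one_sub_exp_neg_sub_inv_mul_eq_zero {a w : ℝ} (ha : a ≠ 0)
    (hw : w * exp w = -a * exp (-a)) : 1 - exp (-(w + a)) - a⁻¹ * (w + a) = 0 := by
  have hexp : exp (-(w + a)) = -a⁻¹ * w := by
    rw [neg_add, exp_add, show exp (-a) = -a⁻¹ * (w * exp w) by field_simp; linarith, exp_neg]
    field_simp
  rw [hexp]
  field_simp
  ring

theorem hasDerivAt_log_one_add_div_rpow (p : ℝ) {t : ℝ} (ht : 0 < t) :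
    HasDerivAt (fun s => log (1 + s) / s ^ p)
      ((1 - (1 + t)⁻¹ - p * log (1 + t)) / (t * t ^ p)) t := by
  have hlog : HasDerivAt (fun s => log (1 + s)) (1 + t)⁻¹ t := by
    simpa using ((hasDerivAt_id t).const_add 1).log (by positivity)
  refine (hlog.div (hasDerivAt_rpow_const (Or.inl ht.ne')) (by positivity)).congr_deriv ?_
  rw [rpow_sub_one ht.ne']
  field_simp
  ring

theorem lt_of_hasDerivAt_pos_of_neg {f f' : ℝ → ℝ} {a b x : ℝ} (hab : a < b)
    (hf : ∀ t, a < t → HasDerivAt f (f' t) t) (hpos : ∀ t, a < t → t < b → 0 < f' t)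
    (hneg : ∀ t, b < t → f' t < 0) (hx : a < x) (hxb : x ≠ b) : f x < f b := by
  have hcont : ContinuousOn f (Ioi a) := fun t ht => (hf t ht).continuousAt.continuousWithinAt
  rcases hxb.lt_or_gt with hlt | hgt
  · refine strictMonoOn_of_deriv_pos (convex_Ioc a b) (hcont.mono Ioc_subset_Ioi_self) ?_
      ⟨hx, hlt.le⟩ ⟨hab, le_rfl⟩ hlt
    intro t ht
    rw [interior_Ioc] at ht
    rw [(hf t ht.1).deriv]
    exact hpos t ht.1 ht.2
  · refine strictAntiOn_of_deriv_neg (convex_Ici b) (hcont.mono (Ici_subset_Ioi.2 hab)) ?_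
      self_mem_Ici hgt.le hgt
    intro t ht
    rw [interior_Ici] at ht
    rw [(hf t (hab.trans ht)).deriv]
    exact hneg t ht

/-- For α > 2, f(β) = log(1+β)/β^{2/α} has a unique global
maximum on (0,∞), attained at β* = -1 + exp(W₀(-(α/2)e^{-α/2}) + α/2). -/
theorem log_over_rpow_unique_max (α : ℝ) (hα : α > 2) (W : ℝ → ℝ)
    (hW : ∀ x : ℝ, -Real.exp (-1) ≤ x → W x * Real.exp (W x) = x ∧ -1 ≤ W x) :
    ∀ β : ℝ, 0 < β →
      β ≠ -1 + Real.exp (W (-(α / 2) * Real.exp (-(α / 2))) + α / 2) →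
      Real.log (1 + β) / β ^ (2 / α) <
        Real.log (1 + (-1 + Real.exp (W (-(α / 2) * Real.exp (-(α / 2))) + α / 2))) /
          (-1 + Real.exp (W (-(α / 2) * Real.exp (-(α / 2))) + α / 2)) ^ (2 / α) := by
  intro β hβ hβne
  obtain ⟨hw, hw_ge⟩ := hW (-(α / 2) * exp (-(α / 2))) (by
    rw [neg_mul, neg_le_neg_iff]
    exact mul_exp_neg_le_exp_neg_one _)
  set w := W (-(α / 2) * exp (-(α / 2)))
  have hu : 0 < w + α / 2 := by linarith
  have hroot : 1 - exp (-(w + α / 2)) - 2 / α * (w + α / 2) = 0 := by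
    have := one_sub_exp_neg_sub_inv_mul_eq_zero (a := α / 2) (by positivity) hw
    rwa [inv_div] at this
  have hconc := strictConcaveOn_one_sub_exp_neg_sub_mul (2 / α)
  have hnum : ∀ t, 0 < t → 1 - (1 + t)⁻¹ - 2 / α * log (1 + t) =
      1 - exp (-log (1 + t)) - 2 / α * log (1 + t) := fun t ht => by
    rw [exp_neg, exp_log (by positivity)]
  have hb : 0 < -1 + exp (w + α / 2) := by linarith [one_lt_exp_iff.2 hu]
  refine lt_of_hasDerivAt_pos_of_neg hb (fun t ht => hasDerivAt_log_one_add_div_rpow _ ht)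
    (fun t ht htb => ?_) (fun t htb => ?_) hβ hβne
  · rw [hnum t ht]
    refine div_pos (hconc.pos_of_lt_root (mem_univ _) (mem_univ _) (mem_univ _) (by simp) hroot
      (log_pos (by linarith)) ?_) (by positivity)
    rw [log_lt_iff_lt_exp (by linarith)]
    linarith
  · have ht : 0 < t := hb.trans htb
    rw [hnum t ht]
    refine div_neg_of_neg_of_pos (hconc.neg_of_root_lt (mem_univ _) (mem_univ _) (mem_univ _)
      (by simp) hroot hu ?_) (by positivity)
    rw [lt_log_iff_exp_lt (by linarith)]
    linarith
end

section
/- A critical point of β ↦ log(1+β)·β^{-2/α} on (0,∞) satisfies (α/2)·β/(1+β) = log(1+β), and the unique positive solution of this equation is β = -1 + exp(W₀(-(α/2)e^{-α/2}) + α/2) for α > 2. -/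
/-!
With `w = log (1 + β) - α / 2`, the equation `(α/2)·β/(1+β) = log (1+β)` says exactly
`w e^w = -(α/2) e^{-(α/2)}`. Besides the trivial root `w = -α/2` it has exactly one other root: since
`t ↦ t e^t` decreases on `(-∞, -1]` and increases on `[-1, ∞)`, any root `w > -α/2` lies in
`[-1, ∞)`, where `W₀` inverts `t ↦ t e^t`. Positivity of `β` gives `w > -α/2`.
-/

open Real Set

lemma hasDerivAt_mul_exp (t : ℝ) : HasDerivAt (fun s => s * exp s) ((1 + t) * exp t) t :=
  ((hasDerivAt_id' t).mul (hasDerivAt_exp t)).congr_deriv (by ring)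

lemma strictMonoOn_mul_exp : StrictMonoOn (fun t => t * exp t) (Ici (-1)) := by
  refine strictMonoOn_of_deriv_pos (convex_Ici _) (by fun_prop) fun t ht => ?_
  rw [interior_Ici, mem_Ioi] at ht
  rw [(hasDerivAt_mul_exp t).deriv]
  exact mul_pos (by linarith) (exp_pos t)

lemma strictAntiOn_mul_exp : StrictAntiOn (fun t => t * exp t) (Iic (-1)) := by
  refine strictAntiOn_of_deriv_neg (convex_Iic _) (by fun_prop) fun t ht => ?_
  rw [interior_Iic, mem_Iio] at ht
  rw [(hasDerivAt_mul_exp t).deriv]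
  exact mul_neg_of_neg_of_pos (by linarith) (exp_pos t)

lemma neg_exp_neg_one_le_mul_exp (t : ℝ) : -exp (-1) ≤ t * exp t := by
  have h : -t ≤ exp (-t - 1) := by linarith [add_one_le_exp (-t - 1)]
  calc -exp (-1) = -(exp (-t - 1) * exp t) := by rw [← exp_add]; ring_nf
    _ ≤ t * exp t := by nlinarith [exp_pos t]

lemma neg_one_lt_of_mul_exp_eq {s t : ℝ} (hs : s ≤ -1) (hst : s < t)
    (h : t * exp t = s * exp s) : -1 < t := by
  by_contra! ht
  exact (strictAntiOn_mul_exp hs ht hst).ne h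

lemma mul_exp_eq_iff_eq_principalBranch {s t : ℝ} (W : ℝ → ℝ)
    (hW : ∀ x : ℝ, -exp (-1) ≤ x → W x * exp (W x) = x ∧ -1 ≤ W x) (hs : s ≤ -1)
    (hst : s < t) : t * exp t = s * exp s ↔ t = W (s * exp s) := by
  obtain ⟨hWeq, hWge⟩ := hW _ (neg_exp_neg_one_le_mul_exp s)
  refine ⟨fun h => strictMonoOn_mul_exp.injOn ?_ hWge (h.trans hWeq.symm), fun h => h ▸ hWeq⟩
  exact (neg_one_lt_of_mul_exp_eq hs hst h).le

lemma mul_div_one_add_eq_log_iff (a : ℝ) {β : ℝ} (hβ : 0 < 1 + β) :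
    a * β / (1 + β) = log (1 + β) ↔
      (log (1 + β) - a) * exp (log (1 + β) - a) = -a * exp (-a) := by
  have := exp_pos a
  rw [exp_sub, exp_log hβ, exp_neg]
  field_simp
  constructor <;> intro h <;> linarith

lemma hasDerivAt_log_one_add_mul_rpow {β : ℝ} (hβ : 0 < β) (p : ℝ) :
    HasDerivAt (fun b => log (1 + b) * b ^ p)
      (β ^ p * (1 / (1 + β) + p * log (1 + β) / β)) β := by
  have hlog : HasDerivAt (fun b => log (1 + b)) (1 / (1 + β)) β := by
    simpa using ((hasDerivAt_id' β).const_add 1).log (by linarith)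
  refine (hlog.mul (hasDerivAt_rpow_const (Or.inl hβ.ne'))).congr_deriv ?_
  rw [rpow_sub_one hβ.ne']
  ring

lemma deriv_log_one_add_mul_rpow_neg_eq_zero_iff {β : ℝ} (hβ : 0 < β) (p : ℝ) :
    deriv (fun b => log (1 + b) * b ^ (-p)) β = 0 ↔ β / (1 + β) = p * log (1 + β) := by
  rw [(hasDerivAt_log_one_add_mul_rpow hβ (-p)).deriv, mul_eq_zero,
    or_iff_right (rpow_pos_of_pos hβ _).ne']
  have : 0 < 1 + β := by linarith
  field_simp
  constructor <;> intro h <;> linarith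

/-- A critical point of β ↦ log(1+β)·β^{-2/α} on (0,∞) satisfies
(α/2)·β/(1+β) = log(1+β), and the unique positive solution of this equation is
β = -1 + exp(W₀(-(α/2)e^{-α/2}) + α/2). -/
theorem critical_point_equation (α : ℝ) (hα : α > 2) (W : ℝ → ℝ)
    (hW : ∀ x : ℝ, -Real.exp (-1) ≤ x → W x * Real.exp (W x) = x ∧ -1 ≤ W x) :
    (∀ β : ℝ, 0 < β →
        deriv (fun b : ℝ => Real.log (1 + b) * b ^ (-(2 / α))) β = 0 →
        (α / 2) * β / (1 + β) = Real.log (1 + β)) ∧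
      (∀ β : ℝ, 0 < β →
        ((α / 2) * β / (1 + β) = Real.log (1 + β) ↔
          β = -1 + Real.exp (W (-(α / 2) * Real.exp (-(α / 2))) + α / 2))) := by
  refine ⟨fun β hβ hcrit => ?_, fun β hβ => ?_⟩
  · rw [deriv_log_one_add_mul_rpow_neg_eq_zero_iff hβ] at hcrit
    rw [mul_div_assoc, hcrit]
    field_simp
  · have hβ' : 0 < 1 + β := by linarith
    have hlog : 0 < log (1 + β) := log_pos (by linarith)
    rw [mul_div_one_add_eq_log_iff _ hβ',
      mul_exp_eq_iff_eq_principalBranch W hW (by linarith) (by linarith), sub_eq_iff_eq_add,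
      ← exp_eq_exp, exp_log hβ', ← sub_eq_iff_eq_add']
    constructor <;> intro h <;> linarith
end
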